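/- (Merris' Theorem) For any threshold graph G on n vertices, the characteristic polynomial of the Laplacian matrix of G equals ∏_{i=1}^{n} (X − |{v ∈ V : deg(v) ≥ i}|); equivalently, the eigenvalues of the Laplacian of G, listed in nonincreasing order λ_1 ≥ λ_2 ≥ ⋯ ≥ λ_n, satisfy λ_i = |{v ∈ V : deg(v) ≥ i}| for each i = 1, 2, …, n. -/

import Mathlib

/-!
A finite threshold graph has a vertex that is isolated or dominating (one of minimal or maximal
weight), and deleting it leaves a threshold graph, so we induct on the number of vertices.
Laplacian rows sum to zero, so `χ(L_G) = X · χ(D)` where `D` is the map induced by `L_G` on the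
quotient by the all-ones vector (`Matrix.deflate`). If the deleted vertex is isolated, `D` is the
Laplacian `L_H` of the rest; if it is dominating, `D = L_H + J + 1` with `J` the all-ones matrix,
whose spectrum is that of `L_H` shifted by one, except that the eigenvalue `0` of the all-ones
vector becomes `|V(H)| + 1`. The conjugate degree sequence `i ↦ #{v | i ≤ deg v}` changes in
exactly the same two ways.
-/

/-- A graph is a threshold graph if there are vertex weights `φ` and a threshold `α`
such that two distinct vertices are adjacent iff the sum of their weights is at least `α`. -/
def IsThreshold {V : Type*} (G : SimpleGraph V) : Prop :=
  ∃ (φ : V → ℝ) (α : ℝ), ∀ u v : V, u ≠ v → (G.Adj u v ↔ α ≤ φ u + φ v)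

open Finset Matrix Polynomial

namespace Matrix

variable {ι R : Type*} [Fintype ι] [DecidableEq ι] [CommRing R]

theorem charpoly_eq_mul_charpoly_submatrix_some (M : Matrix (Option ι) (Option ι) R)
    (hM : ∀ i, M (some i) none = 0) :
    M.charpoly = (X - C (M none none)) * (M.submatrix some some).charpoly := by
  let e : Option ι ≃ ι ⊕ Unit := Equiv.optionEquivSumPUnit ι
  have hblocks : reindex e e M = fromBlocks (M.submatrix some some) 0
      (of fun _ j => M none (some j)) (of fun _ _ => M none none) := by
    ext (i | i) (j | j) <;> simp [e, hM]
  rw [← charpoly_reindex e, hblocks, charpoly_fromBlocks_zero₁₂, mul_comm]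
  congr 1
  simp [charpoly, charmatrix, det_unique]

/-- The matrix of `B` on the quotient `(Option ι → R) ⧸ R ∙ 1` in the basis of the classes of
the `Pi.single (some i) 1`, using `Pi.single none 1 ≡ -∑ i, Pi.single (some i) 1`. It describes
the action of `B` on that quotient when `1` is an eigenvector, i.e. when all row sums agree. -/
def deflate (B : Matrix (Option ι) (Option ι) R) : Matrix ι ι R :=
  of fun i j => B (some i) (some j) - B none (some j)

theorem charpoly_eq_mul_charpoly_deflate (B : Matrix (Option ι) (Option ι) R) {s : R}
    (hB : ∀ i, ∑ j, B i j = s) : B.charpoly = (X - C s) * B.deflate.charpoly := by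
  -- `1 + N` has the all-ones vector as its `none` column, so conjugating by it turns the
  -- `none` column of `B` into `s • Pi.single none 1`.
  let N : Matrix (Option ι) (Option ι) R := of fun i j => if i.isSome ∧ j = none then 1 else 0
  have hN : N * N = 0 := by ext i j; simp [N, mul_apply, Fintype.sum_option]
  have hBP : ∀ k j, (B * (1 + N)) k j = if j = none then s else B k j := by
    intro k j
    cases j <;> simp [N, mul_add, mul_apply, one_apply, Fintype.sum_option, ← hB k]
  have hconj : ∀ (M : Matrix (Option ι) (Option ι) R) k j, ((1 - N) * M) k j =
      if k = none then M none j else M k j - M none j := by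
    intro M k j
    cases k <;> simp [N, sub_mul, mul_apply, one_apply]
  have hB' : B.charpoly = ((1 - N) * (B * (1 + N))).charpoly := by
    have hinv : (1 + N) * (1 - N) = 1 := by simp [mul_sub, add_mul, hN]
    rw [charpoly_mul_comm, mul_assoc, hinv, mul_one]
  rw [hB', charpoly_eq_mul_charpoly_submatrix_some]
  · congr 2
    · simp [hconj, hBP]
    · ext i j; simp [hconj, hBP, deflate]
  · simp [hconj, hBP]

omit [Fintype ι] [DecidableEq ι] in
theorem deflate_add_const (B : Matrix (Option ι) (Option ι) R) (c : R) :
    (B + of fun _ _ => c).deflate = B.deflate := by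
  ext i j; simp [deflate]

theorem X_sub_C_mul_charpoly_add_const_one (B : Matrix ι ι R) {s : R}
    (hB : ∀ i, ∑ j, B i j = s) :
    (X - C s) * (B + of fun _ _ => 1).charpoly = (X - C (s + Fintype.card ι)) * B.charpoly := by
  rcases isEmpty_or_nonempty ι with hι | ⟨⟨i₀⟩⟩
  · simp [charpoly_isEmpty]
  let e := (Equiv.optionSubtypeNe i₀).symm
  have hrow : ∀ (M : Matrix ι ι R) (t : R), (∀ i, ∑ j, M i j = t) →
      ∀ i, ∑ j, reindex e e M i j = t := fun M t hM i => by
    simp only [reindex_apply, submatrix_apply]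
    exact (e.symm.sum_comp _).trans (hM _)
  have hJ : reindex e e (B + of fun _ _ => 1) = reindex e e B + of fun _ _ => 1 := by
    ext i j; simp
  have hsum : ∀ i, ∑ j, (B + of fun _ _ => 1 : Matrix ι ι R) i j = s + Fintype.card ι :=
    fun i => by simp [sum_add_distrib, hB]
  rw [← charpoly_reindex e, ← charpoly_reindex e B,
    charpoly_eq_mul_charpoly_deflate _ (hrow _ _ hsum), hJ, deflate_add_const,
    charpoly_eq_mul_charpoly_deflate _ (hrow _ _ hB)]
  ring

end Matrix

namespace SimpleGraph

section Degree

variable {V W : Type*} [Fintype V] [Fintype W]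

def conjDegree (G : SimpleGraph V) [DecidableRel G.Adj] (i : ℕ) : ℕ := #{v | i ≤ G.degree v}

theorem conjDegree_card_eq_zero (G : SimpleGraph V) [DecidableRel G.Adj] :
    G.conjDegree (Fintype.card V) = 0 := by
  simp [conjDegree, G.degree_lt_card_verts]

theorem conjDegree_zero (G : SimpleGraph V) [DecidableRel G.Adj] :
    G.conjDegree 0 = Fintype.card V := by
  simp [conjDegree]

theorem degree_comap_equiv (G : SimpleGraph W) [DecidableRel G.Adj] (e : V ≃ W) (v : V) :
    (G.comap e).degree v = G.degree (e v) := by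
  rw [← Nat.cast_id ((G.comap e).degree v), ← Nat.cast_id (G.degree (e v)),
    degree_eq_sum_if_adj, degree_eq_sum_if_adj]
  exact e.sum_comp (fun w => if G.Adj (e v) w then 1 else 0)

theorem conjDegree_comap_equiv (G : SimpleGraph W) [DecidableRel G.Adj] (e : V ≃ W) (i : ℕ) :
    (G.comap e).conjDegree i = G.conjDegree i := by
  simp only [conjDegree, card_filter, degree_comap_equiv]
  exact e.sum_comp (fun w => if i ≤ G.degree w then 1 else 0)

theorem degree_some (G : SimpleGraph (Option W)) [DecidableRel G.Adj] (w : W) :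
    G.degree (some w) = (G.comap some).degree w + if G.Adj (some w) none then 1 else 0 := by
  rw [← Nat.cast_id (G.degree (some w)), ← Nat.cast_id ((G.comap some).degree w),
    degree_eq_sum_if_adj, degree_eq_sum_if_adj, Fintype.sum_option, add_comm]
  rfl

theorem conjDegree_succ_of_isIsolated_none (G : SimpleGraph (Option W)) [DecidableRel G.Adj]
    (h : G.IsIsolated none) (i : ℕ) :
    G.conjDegree (i + 1) = (G.comap some).conjDegree (i + 1) := by
  have h₁ : ∀ w, ¬ G.Adj (some w) none := fun w hw => h _ hw.symm
  rw [conjDegree, conjDegree, card_filter, card_filter, Fintype.sum_option]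
  simp only [h.degree_eq_zero, degree_some, h₁]
  simp

theorem conjDegree_succ_of_isIsolated_compl_none (G : SimpleGraph (Option W))
    [DecidableRel G.Adj] (h : Gᶜ.IsIsolated none) (i : ℕ) :
    G.conjDegree (i + 1) = (G.comap some).conjDegree i + if i < Fintype.card W then 1 else 0 := by
  have h₀ : ∀ w, G.Adj none (some w) := fun w => by simpa using h (some w)
  have h₁ : ∀ w, G.Adj (some w) none := fun w => (h₀ w).symm
  have hnone : G.degree none = Fintype.card W := by
    rw [← Nat.cast_id (G.degree none), degree_eq_sum_if_adj, Fintype.sum_option]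
    simp [h₀]
  rw [conjDegree, conjDegree, card_filter, card_filter, Fintype.sum_option]
  simp only [hnone, degree_some, h₁, if_true, add_le_add_iff_right, Nat.succ_le_iff]
  ring

end Degree

section Laplacian

variable {V W R : Type*} [Fintype V] [DecidableEq V] [Fintype W] [DecidableEq W] [CommRing R]

theorem lapMatrix_apply (G : SimpleGraph V) [DecidableRel G.Adj] (i j : V) :
    G.lapMatrix R i j = (if i = j then (G.degree i : R) else 0) - if G.Adj i j then 1 else 0 := by
  simp [lapMatrix, degMatrix, adjMatrix_apply, diagonal_apply]

theorem sum_lapMatrix_row_eq_zero (G : SimpleGraph V) [DecidableRel G.Adj] (i : V) :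
    ∑ j, G.lapMatrix R i j = 0 := by
  simpa [mulVec, dotProduct] using congrFun (G.lapMatrix_mulVec_const_eq_zero (R := R)) i

theorem charpoly_lapMatrix_comap_equiv (G : SimpleGraph W) [DecidableRel G.Adj] (e : V ≃ W) :
    ((G.comap e).lapMatrix R).charpoly = (G.lapMatrix R).charpoly := by
  rw [← Matrix.charpoly_reindex e.symm (G.lapMatrix R)]
  congr 1
  ext i j
  simp [lapMatrix_apply, degree_comap_equiv]

theorem deflate_lapMatrix_of_isIsolated_none (G : SimpleGraph (Option W)) [DecidableRel G.Adj]
    (h : G.IsIsolated none) : (G.lapMatrix R).deflate = (G.comap some).lapMatrix R := by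
  have h₀ : ∀ w, ¬ G.Adj none (some w) := fun w => h _
  have h₁ : ∀ w, ¬ G.Adj (some w) none := fun w hw => h₀ w hw.symm
  ext i j
  simp [deflate, lapMatrix_apply, degree_some, h₀, h₁]

theorem deflate_lapMatrix_of_isIsolated_compl_none (G : SimpleGraph (Option W))
    [DecidableRel G.Adj] (h : Gᶜ.IsIsolated none) :
    (G.lapMatrix R).deflate = (G.comap some).lapMatrix R + of (fun _ _ => 1) + 1 := by
  have h₀ : ∀ w, G.Adj none (some w) := fun w => by simpa using h (some w)
  have h₁ : ∀ w, G.Adj (some w) none := fun w => (h₀ w).symm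
  ext i j
  simp only [deflate, of_apply, Matrix.add_apply, one_apply, lapMatrix_apply, degree_some,
    h₀, h₁, Option.some_inj, reduceCtorEq, if_true, if_false, comap_adj]
  split_ifs <;> push_cast <;> ring

theorem charpoly_lapMatrix_of_isIsolated_none (G : SimpleGraph (Option W)) [DecidableRel G.Adj]
    (h : G.IsIsolated none) :
    (G.lapMatrix R).charpoly = X * ((G.comap some).lapMatrix R).charpoly := by
  rw [charpoly_eq_mul_charpoly_deflate _ (sum_lapMatrix_row_eq_zero G),
    deflate_lapMatrix_of_isIsolated_none G h, map_zero, sub_zero]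

/-- `L_H + J` and `L_H` differ only on the all-ones vector, which is sent to `|W| • 1` instead of
`0`; hence the extra factor `X - 1` after the shift by `1`. -/
theorem charpoly_lapMatrix_of_isIsolated_compl_none (G : SimpleGraph (Option W))
    [DecidableRel G.Adj] (h : Gᶜ.IsIsolated none) :
    (X - 1) * (G.lapMatrix R).charpoly =
      X * (X - C (Fintype.card W + 1 : R)) *
        ((G.comap some).lapMatrix R).charpoly.comp (X - 1) := by
  set L := (G.comap some).lapMatrix R
  have hJ := congrArg (·.comp (X - 1))
    (X_sub_C_mul_charpoly_add_const_one L (sum_lapMatrix_row_eq_zero _))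
  have hshift :
      (L + of (fun _ _ => 1) + 1).charpoly = (L + of fun _ _ => 1).charpoly.comp (X - 1) := by
    have := charpoly_sub_scalar (L + of fun _ _ => 1) (-1)
    rwa [map_neg, map_one, sub_neg_eq_add, map_neg, map_one, ← sub_eq_add_neg] at this
  simp only [mul_comp, sub_comp, X_comp, C_comp, map_zero, sub_zero, zero_add] at hJ
  rw [charpoly_eq_mul_charpoly_deflate _ (sum_lapMatrix_row_eq_zero G),
    deflate_lapMatrix_of_isIsolated_compl_none G h, hshift, map_zero, sub_zero, map_add, map_one]
  linear_combination X * hJ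

theorem charpoly_lapMatrix_eq_prod_of_isIsolated_none (G : SimpleGraph (Option W))
    [DecidableRel G.Adj] (h : G.IsIsolated none)
    (hH : ((G.comap some).lapMatrix R).charpoly =
      ∏ i ∈ range (Fintype.card W), (X - C ((G.comap some).conjDegree (i + 1) : R))) :
    (G.lapMatrix R).charpoly =
      ∏ i ∈ range (Fintype.card W + 1), (X - C (G.conjDegree (i + 1) : R)) := by
  have hlast : G.conjDegree (Fintype.card W + 1) = 0 := by
    simpa using G.conjDegree_card_eq_zero
  rw [charpoly_lapMatrix_of_isIsolated_none G h, hH, prod_range_succ, hlast, mul_comm]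
  simp [conjDegree_succ_of_isIsolated_none G h]

theorem charpoly_lapMatrix_eq_prod_of_isIsolated_compl_none [Nonempty W]
    (G : SimpleGraph (Option W)) [DecidableRel G.Adj] (h : Gᶜ.IsIsolated none)
    (hH : ((G.comap some).lapMatrix R).charpoly =
      ∏ i ∈ range (Fintype.card W), (X - C ((G.comap some).conjDegree (i + 1) : R))) :
    (G.lapMatrix R).charpoly =
      ∏ i ∈ range (Fintype.card W + 1), (X - C (G.conjDegree (i + 1) : R)) := by
  obtain ⟨k, hk⟩ : ∃ k, Fintype.card W = k + 1 :=
    Nat.exists_eq_succ_of_ne_zero Fintype.card_ne_zero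
  set c := (G.comap some).conjDegree
  have hc : ∀ i, G.conjDegree (i + 1) = c i + if i < k + 1 then 1 else 0 := by
    simpa [hk] using conjDegree_succ_of_isIsolated_compl_none G h
  have hc₀ : c 0 = k + 1 := (conjDegree_zero _).trans hk
  have hcₖ : c (k + 1) = 0 := by rw [← hk]; exact conjDegree_card_eq_zero _
  have hshift : ∏ i ∈ range k, (X - C (c (i + 1) : R)).comp (X - 1) =
      ∏ i ∈ range k, (X - C (G.conjDegree (i + 1 + 1) : R)) :=
    prod_congr rfl fun i hi => by
      rw [hc, if_pos (by simp at hi; omega)]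
      simp only [sub_comp, X_comp, C_comp, Nat.cast_add, Nat.cast_one, map_add, map_one]
      ring
  have hreg : IsLeftRegular (X - 1 : R[X]) := by
    simpa using (monic_X_sub_C (1 : R)).isRegular.left
  apply hreg
  dsimp only
  rw [charpoly_lapMatrix_of_isIsolated_compl_none G h, hH, Polynomial.prod_comp, hk,
    prod_range_succ, prod_range_succ', prod_range_succ, hshift, hc, hc, hc₀, hcₖ]
  simp only [sub_comp, X_comp, zero_comp, lt_self_iff_false, if_false, Nat.zero_lt_succ, if_true,
    Nat.cast_add, Nat.cast_one, Nat.cast_zero, map_add, map_one, map_zero]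
  ring

end Laplacian

end SimpleGraph

namespace IsThreshold

variable {V W : Type*}

theorem comap {G : SimpleGraph W} (hG : IsThreshold G) {f : V → W} (hf : Function.Injective f) :
    IsThreshold (G.comap f) := by
  obtain ⟨φ, α, hφ⟩ := hG
  exact ⟨φ ∘ f, α, fun u v huv => hφ (f u) (f v) (hf.ne huv)⟩

theorem exists_isIsolated_or_isIsolated_compl [Finite V] [Nonempty V] {G : SimpleGraph V}
    (hG : IsThreshold G) : ∃ v, G.IsIsolated v ∨ Gᶜ.IsIsolated v := by
  obtain ⟨φ, α, hφ⟩ := hG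
  obtain ⟨u, hu⟩ := Finite.exists_max φ
  obtain ⟨w, hw⟩ := Finite.exists_min φ
  by_cases hα : α ≤ φ u + φ w
  · refine ⟨u, Or.inr fun x hx => ?_⟩
    rw [SimpleGraph.compl_adj] at hx
    exact hx.2 ((hφ u x hx.1).mpr (hα.trans (by linarith [hw x])))
  · refine ⟨w, Or.inl fun x hx => hα ?_⟩
    have := (hφ w x (G.ne_of_adj hx)).mp hx
    linarith [hu x]

theorem charpoly_lapMatrix {R : Type*} [Fintype V] [DecidableEq V] [CommRing R]
    {G : SimpleGraph V} [DecidableRel G.Adj] (hG : IsThreshold G) :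
    (G.lapMatrix R).charpoly =
      ∏ i ∈ range (Fintype.card V), (X - C (G.conjDegree (i + 1) : R)) := by
  induction h : Fintype.card V generalizing V with
  | zero =>
    have := Fintype.card_eq_zero_iff.mp h
    simp [charpoly_isEmpty]
  | succ n ih =>
    have : Nonempty V := Fintype.card_pos_iff.mp (by omega)
    obtain ⟨v, hv⟩ := hG.exists_isIsolated_or_isIsolated_compl
    let e := Equiv.optionSubtypeNe v
    set G' := G.comap e
    have hW : Fintype.card {u // u ≠ v} = n := by simp [Fintype.card_subtype_compl, h]
    have hH := ih ((hG.comap e.injective).comap (Option.some_injective _)) hW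
    rw [← hW] at hH ⊢
    rw [← G.charpoly_lapMatrix_comap_equiv e]
    simp_rw [← G.conjDegree_comap_equiv e]
    rcases hv with hv | hv
    · exact G'.charpoly_lapMatrix_eq_prod_of_isIsolated_none (fun u => hv (e u)) hH
    rcases isEmpty_or_nonempty {u // u ≠ v}
    · refine G'.charpoly_lapMatrix_eq_prod_of_isIsolated_none (fun u => ?_) hH
      cases u with
      | none => exact G'.irrefl
      | some w => exact isEmptyElim w
    · refine G'.charpoly_lapMatrix_eq_prod_of_isIsolated_compl_none (fun u hu => hv (e u) ?_) hH
      rw [SimpleGraph.compl_adj] at hu ⊢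
      exact ⟨e.injective.ne hu.1, hu.2⟩

end IsThreshold

/-- Merris' theorem: for a threshold graph `G` on `n` vertices, the characteristic
polynomial of its Laplacian matrix is `∏_{i=1}^{n} (X − |{v : deg v ≥ i}|)`; in
particular the Laplacian eigenvalues, in nonincreasing order, are
`λ_i = |{v : deg v ≥ i}|`. -/
theorem merris (n : ℕ) (G : SimpleGraph (Fin n)) [DecidableRel G.Adj]
    (hG : IsThreshold G) :
    (G.lapMatrix ℝ).charpoly =
      ∏ i ∈ Finset.Icc 1 n,
        (Polynomial.X - Polynomial.C
          (((Finset.univ.filter fun v : Fin n => i ≤ G.degree v).card : ℝ))) := by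
  rw [← Ico_add_one_right_eq_Icc, prod_Ico_eq_prod_range, add_tsub_cancel_right]
  simpa only [Fintype.card_fin, add_comm 1, SimpleGraph.conjDegree] using
    hG.charpoly_lapMatrix (R := ℝ)
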